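/- Let L be a COM and let D ⊆ U. If the faces F(X) and F(Y) of covectors X, Y ∈ L both shatter D (meaning the topes above X, resp. above Y, restricted to D give all of {-1,+1}^D), then the face F(X ∘ Y) also shatters D. -/
import Mathlib


variable {U : Type*}

/-- Composition of sign vectors. -/
def sComp (X Y : U → SignType) : U → SignType :=
  fun e => if X e = 0 then Y e else X e

/-- The sign-vector partial order. -/
def sLe (X Y : U → SignType) : Prop := ∀ e, X e = 0 ∨ X e = Y e

/-- A tope of a simple COM: a covector with full support. -/
def IsTope (L : Set (U → SignType)) (T : U → SignType) : Prop :=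
  T ∈ L ∧ ∀ e, T e ≠ 0

/-- The face `F(X)` of a covector `X` shatters `D`: every sign pattern in `{-1,+1}^D` is the
restriction to `D` of a tope above `X`. -/
def faceShatters (L : Set (U → SignType)) (X : U → SignType) (D : Set U) : Prop :=
  ∀ p : U → SignType, (∀ e ∈ D, p e ≠ 0) →
    ∃ T, IsTope L T ∧ sLe X T ∧ ∀ e ∈ D, T e = p e

/-- in a COM `L`, if the faces `F(X)` and `F(Y)` both shatter `D`, then the
face `F(X ∘ Y)` also shatters `D`. -/
theorem comp_face_shatters
    (L : Set (U → SignType))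
    (hSE : ∀ X ∈ L, ∀ Y ∈ L, ∀ e, X e * Y e = -1 →
      ∃ Z ∈ L, Z e = 0 ∧ ∀ f, X f * Y f ≠ -1 → Z f = sComp X Y f)
    (hFS : ∀ X ∈ L, ∀ Y ∈ L, sComp X (-Y) ∈ L)
    (X : U → SignType) (hX : X ∈ L) (Y : U → SignType) (hY : Y ∈ L)
    (D : Set U)
    (hXD : faceShatters L X D) (hYD : faceShatters L Y D) :
    faceShatters L (sComp X Y) D := by
  intro p hp
  -- X vanishes on D
  have hX0 : ∀ e ∈ D, X e = 0 := by
    intro e he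
    by_contra h
    obtain ⟨S, hS, hXS, hSD⟩ := hXD (fun f => if X f = 0 then 1 else -X f)
      (by intro f _; dsimp; split <;> [simp; · rename_i hf; cases hXf : X f <;> simp_all])
    have h1 : S e = -X e := by
      have := hSD e he; simp only [h, if_neg h] at this; exact this
    rcases hXS e with h0 | heq
    · exact h h0
    · have h2 : X e = -X e := heq.trans h1
      cases hXe : X e <;> rw [hXe] at h2 h <;> first | exact h rfl | exact absurd h2 (by decide)
  obtain ⟨T, hT, hYT, hTD⟩ := hYD p hp
  -- composition X ∘ T is in L, via FS twice
  have hmem : sComp X T ∈ L := by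
    have h1 := hFS X hX T hT.1
    have h2 := hFS X hX _ h1
    have : sComp X (-(sComp X (-T))) = sComp X T := by
      funext e
      simp only [sComp, Pi.neg_apply]
      split <;> simp_all
    rwa [this] at h2
  refine ⟨sComp X T, ⟨hmem, ?_⟩, ?_, ?_⟩
  · intro e
    simp only [sComp]
    split
    · exact hT.2 e
    · assumption
  · intro e
    simp only [sComp]
    split
    · exact hYT e
    · right; rfl
  · intro e he
    simp only [sComp, if_pos (hX0 e he)]
    exact hTD e he
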